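/- No finite-range extrapolation is sound on the automaton A_bug: (i) no configuration (q7, v) is reachable in A_bug; (ii) for every extrapolation operator extra with finite range, every extra-saturated set N of symbolic states of A_bug fails soundness, i.e., there exists (q, Z) ∈ N such that for all v ∈ Z, the configuration (q, v) is not reachable in A_bug. -/

import Mathlib

open Classical

namespace Timed

/-- A clock valuation assigns a nonnegative real to every clock. -/
abbrev Val (X : Type) := X → NNReal

/-- Time elapse on valuations: `(v+δ)(x) = v(x)+δ`. -/
noncomputable def addVal {X : Type} (v : Val X) (δ : NNReal) : Val X := fun x => v x + δ

/-- Reset of the clocks in `Y` to `0`. -/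
noncomputable def resetVal {X : Type} (Y : Set X) (v : Val X) : Val X :=
  fun x => if x ∈ Y then 0 else v x

/-- Comparison operators `<, ≤, =, ≥, >`. -/
inductive CmpOp | lt | le | eq | ge | gt

def CmpOp.holds : CmpOp → ℝ → ℝ → Prop
  | .lt, a, b => a < b
  | .le, a, b => a ≤ b
  | .eq, a, b => a = b
  | .ge, a, b => a ≥ b
  | .gt, a, b => a > b

/-- Clock constraints: finite conjunctions of `x ⋈ c` and `x - y ⋈ c` (and `true`). -/
inductive ClockConstraint (X : Type) where
  | tt : ClockConstraint X
  | single : X → CmpOp → ℤ → ClockConstraint X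
  | diag : X → X → CmpOp → ℤ → ClockConstraint X
  | conj : ClockConstraint X → ClockConstraint X → ClockConstraint X

def ClockConstraint.sat {X : Type} (v : Val X) : ClockConstraint X → Prop
  | .tt => True
  | .single x op c => op.holds (v x : ℝ) (c : ℝ)
  | .diag x y op c => op.holds ((v x : ℝ) - (v y : ℝ)) (c : ℝ)
  | .conj g₁ g₂ => g₁.sat v ∧ g₂.sat v

/-- `⟦g⟧`, the set of valuations satisfying `g`. -/
def sem {X : Type} (g : ClockConstraint X) : Set (Val X) := {v | g.sat v}

/-- A zone is a set of valuations definable by a clock constraint. -/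
def IsZone {X : Type} (Z : Set (Val X)) : Prop := ∃ g : ClockConstraint X, Z = sem g

/-- Future (time elapse) of a set of valuations. -/
def future {X : Type} (W : Set (Val X)) : Set (Val X) :=
  {w | ∃ v ∈ W, ∃ δ : NNReal, w = addVal v δ}

/-- Reset of a set of valuations: `[Y]W`. -/
def resetSet {X : Type} (Y : Set X) (W : Set (Val X)) : Set (Val X) :=
  resetVal Y '' W

/-- A timed automaton `(Q, X, q₀, T, F)`. -/
structure Automaton (Q X : Type) where
  init : Q
  trans : Set (Q × ClockConstraint X × Set X × Q)
  final : Set Q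

/-- `Post_t(W) = {v' : ∃ v ∈ W, ∃ δ ≥ 0, v ⊨ g ∧ v' = [Y]v + δ}` for `t = (q,g,Y,q')`. -/
def Post {Q X : Type} (t : Q × ClockConstraint X × Set X × Q) (W : Set (Val X)) :
    Set (Val X) :=
  {w | ∃ v ∈ W, ∃ δ : NNReal, t.2.1.sat v ∧ w = addVal (resetVal t.2.2.1 v) δ}

/-- The zero valuation. -/
def zeroVal (X : Type) : Val X := fun _ => 0

/-- One step of the semantics: a time elapse or a discrete transition. -/
inductive Step {Q X : Type} (A : Automaton Q X) : (Q × Val X) → (Q × Val X) → Prop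
  | delay (q : Q) (v : Val X) (δ : NNReal) : Step A (q, v) (q, addVal v δ)
  | disc {q : Q} {v : Val X} {g : ClockConstraint X} {R : Set X} {q₁ : Q}
      (ht : (q, g, R, q₁) ∈ A.trans) (hg : g.sat v) :
      Step A (q, v) (q₁, resetVal R v)

/-- A configuration is reachable if some finite run from `(q₀, 0)` ends in it. -/
def Reachable {Q X : Type} (A : Automaton Q X) (c : Q × Val X) : Prop :=
  Relation.ReflTransGen (Step A) (A.init, zeroVal X) c

/-- The initial zone `Z₀ = future {0}`. -/
def initZone (X : Type) : Set (Val X) := future {zeroVal X}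

/-- The set `S` of reachable symbolic states: least set containing `(q₀, Z₀)` and
closed under nonempty `Post`. -/
inductive SymbReach {Q X : Type} (A : Automaton Q X) : Q × Set (Val X) → Prop
  | init : SymbReach A (A.init, initZone X)
  | step {q : Q} {Z : Set (Val X)} {g : ClockConstraint X} {Y : Set X} {q' : Q}
      (h : SymbReach A (q, Z)) (ht : (q, g, Y, q') ∈ A.trans)
      (hne : Post (q, g, Y, q') Z ≠ ∅) :
      SymbReach A (q', Post (q, g, Y, q') Z)

/-- `N` is saturated w.r.t. the extrapolation operator `extra`. -/
def ExtraSaturated {Q X : Type} (A : Automaton Q X)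
    (extra : Q → Set (Val X) → Set (Val X)) (N : Set (Q × Set (Val X))) : Prop :=
  (∃ Z'', (A.init, Z'') ∈ N ∧ extra A.init (initZone X) ⊆ Z'') ∧
  ∀ q Z, (q, Z) ∈ N → ∀ g Y q', (q, g, Y, q') ∈ A.trans →
    Post (q, g, Y, q') Z ≠ ∅ →
    ∃ Z'', (q', Z'') ∈ N ∧ extra q' (Post (q, g, Y, q') Z) ⊆ Z''

/-- A `K`-bounded clock constraint: every `x ⋈ c` has `-K x ≤ c ≤ K x` and
every `x - y ⋈ c` has `-K y ≤ c ≤ K x`. -/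
def KBounded {X : Type} (K : X → ℕ) : ClockConstraint X → Prop
  | .tt => True
  | .single x _ c => -(K x : ℤ) ≤ c ∧ c ≤ (K x : ℤ)
  | .diag x y _ c => -(K y : ℤ) ≤ c ∧ c ≤ (K x : ℤ)
  | .conj g₁ g₂ => KBounded K g₁ ∧ KBounded K g₂

/-- A `K`-bounded zone. -/
def IsKBoundedZone {X : Type} (K : X → ℕ) (Z : Set (Val X)) : Prop :=
  ∃ g : ClockConstraint X, KBounded K g ∧ Z = sem g

/-- An `LU`-bounded clock constraint: every `x ⋈ c` has `-U x ≤ c ≤ L x` and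
every `x - y ⋈ c` has `-U y ≤ c ≤ L x`. -/
def LUBounded {X : Type} (L U : X → ℕ) : ClockConstraint X → Prop
  | .tt => True
  | .single x _ c => -(U x : ℤ) ≤ c ∧ c ≤ (L x : ℤ)
  | .diag x y _ c => -(U y : ℤ) ≤ c ∧ c ≤ (L x : ℤ)
  | .conj g₁ g₂ => LUBounded L U g₁ ∧ LUBounded L U g₂

/-- An `LU`-bounded zone. -/
def IsLUBoundedZone {X : Type} (L U : X → ℕ) (Z : Set (Val X)) : Prop :=
  ∃ g : ClockConstraint X, LUBounded L U g ∧ Z = sem g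

/-- A diagonal-free clock constraint. -/
def DiagFree {X : Type} : ClockConstraint X → Prop
  | .tt => True
  | .single _ _ _ => True
  | .diag _ _ _ _ => False
  | .conj g₁ g₂ => DiagFree g₁ ∧ DiagFree g₂

/-- Every atomic constraint `x ⋈ c` of the guard satisfies `c ≤ K x`. -/
def GuardKBounded {X : Type} (K : X → ℕ) : ClockConstraint X → Prop
  | .tt => True
  | .single x _ c => c ≤ (K x : ℤ)
  | .diag _ _ _ _ => True
  | .conj g₁ g₂ => GuardKBounded K g₁ ∧ GuardKBounded K g₂

/-- `LU`-boundedness of guards: `x < c`, `x ≤ c` need `c ≤ U x`; `x > d`, `x ≥ d`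
need `d ≤ L x`; `x = c` needs both. -/
def GuardLUBounded {X : Type} (L U : X → ℕ) : ClockConstraint X → Prop
  | .tt => True
  | .single x op c =>
      match op with
      | .lt => c ≤ (U x : ℤ)
      | .le => c ≤ (U x : ℤ)
      | .gt => c ≤ (L x : ℤ)
      | .ge => c ≤ (L x : ℤ)
      | .eq => c ≤ (U x : ℤ) ∧ c ≤ (L x : ℤ)
  | .diag _ _ _ _ => True
  | .conj g₁ g₂ => GuardLUBounded L U g₁ ∧ GuardLUBounded L U g₂

/-- A (strong timed) simulation: a preorder relating only configurations with the same
state, compatible with time elapses and discrete transitions. -/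
def IsSimulation {Q X : Type} (A : Automaton Q X)
    (R : (Q × Val X) → (Q × Val X) → Prop) : Prop :=
  (∀ c, R c c) ∧
  (∀ c₁ c₂ c₃, R c₁ c₂ → R c₂ c₃ → R c₁ c₃) ∧
  (∀ c c', R c c' → c.1 = c'.1) ∧
  (∀ q v v', R (q, v) (q, v') →
    (∀ δ : NNReal, R (q, addVal v δ) (q, addVal v' δ)) ∧
    (∀ g Y q₁, (q, g, Y, q₁) ∈ A.trans → g.sat v →
      g.sat v' ∧ R (q₁, resetVal Y v) (q₁, resetVal Y v')))

/-- Labels of run steps: a delay, or a discrete transition. -/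
inductive RunLabel (Q X : Type) where
  | delay : NNReal → RunLabel Q X
  | disc : Q × ClockConstraint X × Set X × Q → RunLabel Q X

/-- Finite runs with an explicit sequence of delays and transitions. -/
inductive LRun {Q X : Type} (A : Automaton Q X) :
    (Q × Val X) → List (RunLabel Q X) → (Q × Val X) → Prop
  | refl (c : Q × Val X) : LRun A c [] c
  | delay {q : Q} {v : Val X} (δ : NNReal) {l : List (RunLabel Q X)} {c' : Q × Val X}
      (h : LRun A (q, addVal v δ) l c') : LRun A (q, v) (RunLabel.delay δ :: l) c'
  | disc {q : Q} {v : Val X} {g : ClockConstraint X} {Y : Set X} {q₁ : Q}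
      {l : List (RunLabel Q X)} {c' : Q × Val X}
      (ht : (q, g, Y, q₁) ∈ A.trans) (hg : g.sat v)
      (h : LRun A (q₁, resetVal Y v) l c') :
      LRun A (q, v) (RunLabel.disc (q, g, Y, q₁) :: l) c'

/-- `N` is saturated w.r.t. the simulation `R`. -/
def SimSaturated {Q X : Type} (A : Automaton Q X)
    (R : (Q × Val X) → (Q × Val X) → Prop) (N : Set (Q × Set (Val X))) : Prop :=
  (∃ Z'', (A.init, Z'') ∈ N ∧ ∀ v ∈ initZone X, ∃ v' ∈ Z'', R (A.init, v) (A.init, v')) ∧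
  ∀ q Z, (q, Z) ∈ N → ∀ g Y q', (q, g, Y, q') ∈ A.trans →
    Post (q, g, Y, q') Z ≠ ∅ →
    ∃ Z'', (q', Z'') ∈ N ∧ ∀ v ∈ Post (q, g, Y, q') Z, ∃ v' ∈ Z'', R (q', v) (q', v')

/-- Atomic constraints, allowing the zero clock `x₀` on the left of a difference. -/
inductive Atom (X : Type) where
  | single : X → CmpOp → ℤ → Atom X
  | negSingle : X → CmpOp → ℤ → Atom X    -- `x₀ - y ⋈ c`
  | diag : X → X → CmpOp → ℤ → Atom X

def Atom.sat {X : Type} (v : Val X) : Atom X → Prop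
  | .single x op c => op.holds (v x : ℝ) (c : ℝ)
  | .negSingle y op c => op.holds (-(v y : ℝ)) (c : ℝ)
  | .diag x y op c => op.holds ((v x : ℝ) - (v y : ℝ)) (c : ℝ)

/-- `pre(φ, Y)` of an atomic constraint w.r.t. a reset set `Y`. -/
noncomputable def preAtom {X : Type} (Y : Set X) : Atom X → Set (Atom X)
  | .single x op c => if x ∈ Y then ∅ else {Atom.single x op c}
  | .negSingle y op c => if y ∈ Y then ∅ else {Atom.negSingle y op c}
  | .diag x y op c =>
      if x ∈ Y then (if y ∈ Y then ∅ else {Atom.negSingle y op c})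
      else (if y ∈ Y then {Atom.single x op c} else {Atom.diag x y op c})

/-- The set of atomic constraints of a guard. -/
def atomsOf {X : Type} : ClockConstraint X → Set (Atom X)
  | .tt => ∅
  | .single x op c => {Atom.single x op c}
  | .diag x y op c => {Atom.diag x y op c}
  | .conj g₁ g₂ => atomsOf g₁ ∪ atomsOf g₂

/-- One step of the fixpoint equations defining the constraint map `G`. -/
noncomputable def cmapStep {Q X : Type} (A : Automaton Q X)
    (G : Q → Set (Atom X)) (q : Q) : Set (Atom X) :=
  {φ | ∃ g Y q', (q, g, Y, q') ∈ A.trans ∧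
        (φ ∈ atomsOf g ∨ ∃ ψ ∈ G q', φ ∈ preAtom Y ψ)}

/-- The `G`-preorder: `(q,v) ≼_G (q,v')` iff for all `δ` and all `φ ∈ G q`,
`v+δ ⊨ φ` implies `v'+δ ⊨ φ` (only configurations with the same state are related). -/
def GPre {Q X : Type} (G : Q → Set (Atom X)) (c c' : Q × Val X) : Prop :=
  c.1 = c'.1 ∧
  ∀ δ : NNReal, ∀ φ ∈ G c.1, Atom.sat (addVal c.2 δ) φ → Atom.sat (addVal c'.2 δ) φ

end Timed
open Timed

/-- The automaton `A_bug` of Figure 3, over clocks `x1, x2, x3, x4` (indices `0..3`)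
and states `q0, …, q7` (indices `0..7`). -/
def Abug : Automaton (Fin 8) (Fin 4) where
  init := 0
  trans :=
    {(0, ClockConstraint.single 2 CmpOp.le 3, ({0, 2} : Set (Fin 4)), 1),
     (1, ClockConstraint.single 1 CmpOp.eq 3, ({1} : Set (Fin 4)), 2),
     (2, ClockConstraint.single 0 CmpOp.eq 2, ({0} : Set (Fin 4)), 3),
     (3, ClockConstraint.single 1 CmpOp.eq 2, ({1} : Set (Fin 4)), 2),
     (2, ClockConstraint.single 0 CmpOp.eq 2, ({0} : Set (Fin 4)), 4),
     (4, ClockConstraint.single 1 CmpOp.eq 2, ({1} : Set (Fin 4)), 5),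
     (5, ClockConstraint.single 0 CmpOp.eq 3, ({0} : Set (Fin 4)), 6),
     (6, ClockConstraint.conj (ClockConstraint.diag 1 0 CmpOp.gt 2)
           (ClockConstraint.diag 3 2 CmpOp.lt 2), (∅ : Set (Fin 4)), 7)}
  final := {7}


/-!
(i) Along every run of `A_bug` the quantity `x1 - x2 + (x4 - x3)` is `3` in `q2` and `q5`, `1` in
`q3` and `q4` and `0` in `q6`, whereas the guard of `q6 → q7` forces it to be negative.

(ii) `Post` maps zones to zones (Fourier–Motzkin elimination of the reset clocks and of the delay),
so a saturated set of zones has, after the `n`-th round of the loop `q2 → q3 → q2`, a zone at `q2`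
containing `(2, 0, 2 + 2n, 3 + 2n)` and `(2, 2, 2 + 2n, 5 + 2n)`. By finite range two rounds
`m < n` are extrapolated to the same zone, so the zone that follows round `m` contains the first
valuation of round `m + 1` and the second one of round `n + 1`. A zone contains every valuation
whose clocks and clock differences lie between those of two of its members, here
`(2, 2, 4 + 2(m + 1), 5 + 2(m + 1))`, from which `q7` is reachable. Saturation then puts a zone at
`q7` into the set, and no configuration in it is reachable.
-/

def LtOrLe (strict : Bool) (x y : ℝ) : Prop := if strict then x < y else x ≤ y

namespace LtOrLe

variable {s s' : Bool} {x x' y y' z : ℝ}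

theorem of_lt (h : x < y) : LtOrLe s x y := by
  cases s
  exacts [h.le, h]

theorem le (h : LtOrLe s x y) : x ≤ y := by
  cases s
  exacts [h, h.le]

theorem trans (h : LtOrLe s x y) (h' : LtOrLe s' y z) : LtOrLe (s || s') x z := by
  cases s <;> cases s'
  exacts [h.trans h', h.trans_lt h', h.trans_le h', h.trans h']

theorem exists_between (h : LtOrLe (s || s') x z) : ∃ y, LtOrLe s x y ∧ LtOrLe s' y z := by
  rcases h.le.lt_or_eq with hlt | rfl
  · obtain ⟨y, hxy, hyz⟩ := _root_.exists_between hlt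
    exact ⟨y, of_lt hxy, of_lt hyz⟩
  · refine ⟨x, ?_, ?_⟩ <;> cases s <;> cases s' <;> simp_all [LtOrLe]

theorem iff_of_sub_eq (h : x - y = x' - y') : LtOrLe s x y ↔ LtOrLe s x' y' := by
  cases s <;> simp only [LtOrLe, Bool.false_eq_true, if_true, if_false, ← sub_neg (a := x),
    ← sub_nonpos (a := x), ← sub_neg (a := x'), ← sub_nonpos (a := x'), h]

theorem of_toLex_le_left (hle : toLex (x, s) ≤ toLex (x', s')) (h : LtOrLe s' x' y) :
    LtOrLe s x y := by
  rcases Prod.Lex.toLex_le_toLex.1 hle with hlt | ⟨rfl, hs⟩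
  · exact of_lt (hlt.trans_le h.le)
  · cases s <;> cases s' <;> first | exact h | exact h.le | exact absurd hs (by simp)

theorem of_toLex_le_right (hle : toLex (y', !s') ≤ toLex (y, !s)) (h : LtOrLe s' x y') :
    LtOrLe s x y := by
  rcases Prod.Lex.toLex_le_toLex.1 hle with hlt | ⟨rfl, hs⟩
  · exact of_lt (h.le.trans_lt hlt)
  · cases s <;> cases s' <;> first | exact h | exact h.le | exact absurd hs (by simp)

end LtOrLe

theorem exists_ltOrLe_of_pairwise {α β : Type*} {s : Set α} {t : Set β} (hs : s.Finite)
    (ht : t.Finite) (l : α → ℝ) (p : α → Bool) (u : β → ℝ) (q : β → Bool)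
    (h : ∀ a ∈ s, ∀ b ∈ t, LtOrLe (p a || q b) (l a) (u b)) :
    ∃ r, (∀ a ∈ s, LtOrLe (p a) (l a) r) ∧ ∀ b ∈ t, LtOrLe (q b) r (u b) := by
  -- only the tightest lower and the tightest upper bound matter
  have lower : s.Nonempty → ∃ a₀ ∈ s, ∀ r, LtOrLe (p a₀) (l a₀) r →
      ∀ a ∈ s, LtOrLe (p a) (l a) r := fun hne => by
    obtain ⟨a₀, ha₀, hmax⟩ := s.exists_max_image (fun a => toLex (l a, p a)) hs hne
    exact ⟨a₀, ha₀, fun r hr a ha => LtOrLe.of_toLex_le_left (hmax a ha) hr⟩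
  have upper : t.Nonempty → ∃ b₀ ∈ t, ∀ r, LtOrLe (q b₀) r (u b₀) →
      ∀ b ∈ t, LtOrLe (q b) r (u b) := fun hne => by
    obtain ⟨b₀, hb₀, hmin⟩ := t.exists_min_image (fun b => toLex (u b, !q b)) ht hne
    exact ⟨b₀, hb₀, fun r hr b hb => LtOrLe.of_toLex_le_right (hmin b hb) hr⟩
  rcases s.eq_empty_or_nonempty with rfl | hs' <;> rcases t.eq_empty_or_nonempty with rfl | ht'
  · exact ⟨0, by simp, by simp⟩
  · obtain ⟨b₀, -, hb₀⟩ := upper ht'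
    exact ⟨u b₀ - 1, by simp, hb₀ _ (LtOrLe.of_lt (by linarith))⟩
  · obtain ⟨a₀, -, ha₀⟩ := lower hs'
    exact ⟨l a₀ + 1, ha₀ _ (LtOrLe.of_lt (by linarith)), by simp⟩
  · obtain ⟨a₀, ha₀s, ha₀⟩ := lower hs'
    obtain ⟨b₀, hb₀t, hb₀⟩ := upper ht'
    obtain ⟨r, hl, hu⟩ := (h a₀ ha₀s b₀ hb₀t).exists_between
    exact ⟨r, ha₀ r hl, hb₀ r hu⟩

/-- The constraint `fst - snd < bound` (`≤` if not `strict`); the index `none` is the zero clock,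
whose value is always `0`. -/
structure DiffAtom (ι : Type*) where
  fst : Option ι
  snd : Option ι
  strict : Bool
  bound : ℤ

namespace DiffAtom

variable {ι κ : Type*}

def Holds (ρ : ι → ℝ) (a : DiffAtom ι) : Prop :=
  LtOrLe a.strict (a.fst.elim' 0 ρ - a.snd.elim' 0 ρ) a.bound

def map (f : Option ι → Option κ) (a : DiffAtom ι) : DiffAtom κ :=
  ⟨f a.fst, f a.snd, a.strict, a.bound⟩

theorem holds_map {f : Option ι → Option κ} {ρ : ι → ℝ} {σ : κ → ℝ} {d : ℝ}
    (h : ∀ i, (f i).elim' 0 σ = i.elim' 0 ρ + d) (a : DiffAtom ι) :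
    (a.map f).Holds σ ↔ a.Holds ρ :=
  LtOrLe.iff_of_sub_eq (by simp only [map, h]; ring)

/- `elimVar` eliminates the variable `none : Option ι`, which an atom of `DiffAtom (Option ι)`
refers to by the index `some none`, by Fourier–Motzkin. -/

def IsLower (a : DiffAtom (Option ι)) : Prop := a.fst ≠ some none ∧ a.snd = some none

def IsUpper (a : DiffAtom (Option ι)) : Prop := a.fst = some none ∧ a.snd ≠ some none

def combine (lo up : DiffAtom (Option ι)) : DiffAtom ι :=
  ⟨lo.fst.join, up.snd.join, lo.strict || up.strict, lo.bound + up.bound⟩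

noncomputable def elimVar (L : List (DiffAtom (Option ι))) : List (DiffAtom ι) :=
  (L.filter fun a => ¬a.IsLower ∧ ¬a.IsUpper).map (map Option.join) ++
    (L.filter fun a => a.IsLower).flatMap fun lo => (L.filter fun a => a.IsUpper).map lo.combine

theorem elim'_join {i : Option (Option ι)} (hi : i ≠ some none) (ρ : ι → ℝ) (r : ℝ) :
    i.join.elim' 0 ρ = i.elim' 0 (Option.elim' r ρ) := by
  rcases i with _ | _ | x <;> simp_all

theorem holds_map_join {a : DiffAtom (Option ι)} (hl : ¬a.IsLower) (hu : ¬a.IsUpper)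
    (ρ : ι → ℝ) (r : ℝ) : (a.map Option.join).Holds ρ ↔ a.Holds (Option.elim' r ρ) := by
  rcases a with ⟨_ | _ | x, _ | _ | y, s, c⟩ <;>
    simp_all [IsLower, IsUpper, Holds, map]

theorem IsLower.holds_iff {a : DiffAtom (Option ι)} (h : a.IsLower) (ρ : ι → ℝ) (r : ℝ) :
    a.Holds (Option.elim' r ρ) ↔ LtOrLe a.strict (a.fst.join.elim' 0 ρ - a.bound) r := by
  refine LtOrLe.iff_of_sub_eq ?_
  rw [h.2, elim'_join h.1 ρ r]
  simp only [Option.elim']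
  ring

theorem IsUpper.holds_iff {a : DiffAtom (Option ι)} (h : a.IsUpper) (ρ : ι → ℝ) (r : ℝ) :
    a.Holds (Option.elim' r ρ) ↔ LtOrLe a.strict r (a.snd.join.elim' 0 ρ + a.bound) := by
  refine LtOrLe.iff_of_sub_eq ?_
  rw [h.1, elim'_join h.2 ρ r]
  simp only [Option.elim']
  ring

theorem holds_combine_iff (lo up : DiffAtom (Option ι)) (ρ : ι → ℝ) :
    (lo.combine up).Holds ρ ↔ LtOrLe (lo.strict || up.strict)
      (lo.fst.join.elim' 0 ρ - lo.bound) (up.snd.join.elim' 0 ρ + up.bound) :=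
  LtOrLe.iff_of_sub_eq (by simp only [combine]; push_cast; ring)

theorem forall_holds_elimVar_iff {L : List (DiffAtom (Option ι))} {ρ : ι → ℝ} :
    (∀ a ∈ elimVar L, a.Holds ρ) ↔ ∃ r, ∀ a ∈ L, a.Holds (Option.elim' r ρ) := by
  simp only [elimVar, List.mem_append, List.mem_map, List.mem_flatMap, List.mem_filter,
    decide_eq_true_eq]
  constructor
  · intro h
    obtain ⟨r, hlo, hup⟩ := exists_ltOrLe_of_pairwise
      (L.finite_toSet.subset fun a (ha : a ∈ L ∧ a.IsLower) => ha.1)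
      (L.finite_toSet.subset fun a (ha : a ∈ L ∧ a.IsUpper) => ha.1)
      (fun a => a.fst.join.elim' 0 ρ - a.bound) strict
      (fun a => a.snd.join.elim' 0 ρ + a.bound) strict
      fun lo hlo up hup => (holds_combine_iff lo up ρ).1 (h _ (.inr ⟨lo, hlo, up, hup, rfl⟩))
    refine ⟨r, fun a ha => ?_⟩
    by_cases hl : a.IsLower
    · exact (hl.holds_iff ρ r).2 (hlo a ⟨ha, hl⟩)
    by_cases hu : a.IsUpper
    · exact (hu.holds_iff ρ r).2 (hup a ⟨ha, hu⟩)
    exact (holds_map_join hl hu ρ r).1 (h _ (.inl ⟨a, ⟨ha, hl, hu⟩, rfl⟩))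
  · rintro ⟨r, hr⟩ a (⟨b, ⟨hb, hl, hu⟩, rfl⟩ | ⟨lo, ⟨hlo, hl⟩, up, ⟨hup, hu⟩, rfl⟩)
    · exact (holds_map_join hl hu ρ r).2 (hr b hb)
    · exact (holds_combine_iff lo up ρ).2
        (((hl.holds_iff ρ r).1 (hr lo hlo)).trans ((hu.holds_iff ρ r).1 (hr up hup)))

def ofCmp (i j : Option ι) : CmpOp → ℤ → List (DiffAtom ι)
  | .lt, c => [⟨i, j, true, c⟩]
  | .le, c => [⟨i, j, false, c⟩]
  | .eq, c => [⟨i, j, false, c⟩, ⟨j, i, false, -c⟩]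
  | .ge, c => [⟨j, i, false, -c⟩]
  | .gt, c => [⟨j, i, true, -c⟩]

theorem forall_holds_ofCmp_iff (i j : Option ι) (op : CmpOp) (c : ℤ) (ρ : ι → ℝ) :
    (∀ a ∈ ofCmp i j op c, a.Holds ρ) ↔ op.holds (i.elim' 0 ρ - j.elim' 0 ρ) c := by
  cases op <;> simp only [ofCmp, List.forall_mem_cons, List.not_mem_nil, IsEmpty.forall_iff,
    implies_true, and_true, Holds, LtOrLe, CmpOp.holds, Bool.false_eq_true, if_true, if_false,
    Int.cast_neg]
  all_goals constructor <;> intro h <;> (try obtain ⟨h₁, h₂⟩ := h) <;> (try constructor) <;>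
    linarith

variable {X : Type}

noncomputable def toConstraint [Nonempty X] : DiffAtom X → ClockConstraint X
  | ⟨some x, some y, s, c⟩ => .diag x y (cond s .lt .le) c
  | ⟨some x, none, s, c⟩ => .single x (cond s .lt .le) c
  | ⟨none, some y, s, c⟩ => .single y (cond s .gt .ge) (-c)
  -- the constant constraint `0 ⋈ c`, written as `x - x ⋈ c` for some clock `x`
  | ⟨none, none, s, c⟩ => .diag (Classical.arbitrary X) (Classical.arbitrary X) (cond s .lt .le) c

theorem sat_toConstraint_iff [Nonempty X] (a : DiffAtom X) (v : Val X) :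
    a.toConstraint.sat v ↔ a.Holds fun x => (v x : ℝ) := by
  rcases a with ⟨_ | x, _ | y, _ | _, c⟩ <;>
    simp [toConstraint, ClockConstraint.sat, CmpOp.holds, Holds, LtOrLe, neg_lt, neg_le]

end DiffAtom

namespace Timed

open DiffAtom

variable {Q X : Type}

def ClockConstraint.toAtoms : ClockConstraint X → List (DiffAtom X)
  | .tt => []
  | .single x op c => ofCmp (some x) none op c
  | .diag x y op c => ofCmp (some x) (some y) op c
  | .conj g h => g.toAtoms ++ h.toAtoms

def atomSet (L : List (DiffAtom X)) : Set (Val X) := {v | ∀ a ∈ L, a.Holds fun x => (v x : ℝ)}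

theorem sem_eq_atomSet (g : ClockConstraint X) : sem g = atomSet g.toAtoms := by
  ext v
  induction g with
  | tt => simp [sem, atomSet, ClockConstraint.sat, ClockConstraint.toAtoms]
  | single x op c =>
    simp [sem, atomSet, ClockConstraint.sat, ClockConstraint.toAtoms, forall_holds_ofCmp_iff]
  | diag x y op c =>
    simp [sem, atomSet, ClockConstraint.sat, ClockConstraint.toAtoms, forall_holds_ofCmp_iff]
  | conj g h ihg ihh =>
    simp only [sem, atomSet, Set.mem_ofPred_eq] at ihg ihh ⊢
    simp [ClockConstraint.sat, ClockConstraint.toAtoms, ihg, ihh, or_imp, forall_and]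

theorem isZone_atomSet [Nonempty X] (L : List (DiffAtom X)) : IsZone (atomSet L) := by
  refine ⟨L.foldr (fun a g => .conj a.toConstraint g) .tt, ?_⟩
  induction L with
  | nil => simp [sem, atomSet, ClockConstraint.sat]
  | cons a L ih =>
    ext v
    simp only [atomSet, sem, Set.mem_ofPred_eq, Set.ext_iff] at ih ⊢
    simp [ClockConstraint.sat, sat_toConstraint_iff, ih]

theorem IsZone.exists_atomSet_eq {Z : Set (Val X)} (h : IsZone Z) : ∃ L, Z = atomSet L := by
  obtain ⟨g, rfl⟩ := h
  exact ⟨g.toAtoms, sem_eq_atomSet g⟩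

/-- `0 ≤ r` for the variable `r` to be eliminated. -/
def nonnegVarAtom : DiffAtom (Option X) := ⟨none, some none, false, 0⟩

/-- Clock `x` becomes the variable to be eliminated. -/
noncomputable def freeClock (x : X) : Option X → Option (Option X) :=
  Option.map fun y => if y = x then none else some y

noncomputable def resetAtoms (x : X) (L : List (DiffAtom X)) : List (DiffAtom X) :=
  ⟨some x, none, false, 0⟩ :: elimVar (nonnegVarAtom :: L.map (map (freeClock x)))

theorem resetSet_singleton_atomSet (x : X) (L : List (DiffAtom X)) :
    resetSet {x} (atomSet L) = atomSet (resetAtoms x L) := by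
  have hfree : ∀ (w : Val X) (r : ℝ) (i : Option X),
      (freeClock x i).elim' 0 (Option.elim' r fun y => (w y : ℝ)) =
        i.elim' 0 (Function.update (fun y => (w y : ℝ)) x r) + 0 := by
    rintro w r (_ | y)
    · simp [freeClock]
    · by_cases hy : y = x <;> simp [freeClock, hy, Function.update_of_ne]
  ext w
  simp only [resetSet, Set.mem_image, resetAtoms, atomSet, Set.mem_ofPred_eq, List.forall_mem_cons,
    forall_holds_elimVar_iff, List.forall_mem_map, holds_map (hfree w _)]
  constructor
  · rintro ⟨v, hv, rfl⟩
    have hv' : Function.update (fun y => (resetVal {x} v y : ℝ)) x (v x) = fun y => (v y : ℝ) := by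
      ext y
      rcases eq_or_ne y x with rfl | hy
      · simp
      · simp [resetVal, hy]
    exact ⟨by simp [Holds, LtOrLe, resetVal], v x, by simp [nonnegVarAtom, Holds, LtOrLe],
      hv' ▸ hv⟩
  · rintro ⟨hx, r, hr, hL⟩
    simp only [Holds, LtOrLe, nonnegVarAtom, Bool.false_eq_true, if_false] at hx hr
    have hr' : 0 ≤ r := by simpa using hr
    have hwx : w x = 0 := by
      have : (w x : ℝ) ≤ 0 := by simpa using hx
      exact_mod_cast le_antisymm this (w x).coe_nonneg
    have hv : (fun y => (Function.update w x r.toNNReal y : ℝ)) =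
        Function.update (fun y => (w y : ℝ)) x r := by
      ext y
      rcases eq_or_ne y x with rfl | hy
      · simp [hr']
      · simp [hy]
    refine ⟨Function.update w x r.toNNReal, hv ▸ hL, ?_⟩
    ext y : 1
    rcases eq_or_ne y x with rfl | hy
    · simp [resetVal, hwx]
    · simp [resetVal, hy]

/-- `0 ≤ δ ≤ x` for every clock `x`, where `δ` is the variable to be eliminated. -/
noncomputable def delayAtoms [Fintype X] : List (DiffAtom (Option X)) :=
  nonnegVarAtom :: (Finset.univ : Finset X).toList.map fun x => ⟨some none, some (some x), false, 0⟩

/-- The zero clock is replaced by the delay `δ`, so that `v + δ` satisfies the new atoms iff `v`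
satisfies the old ones. -/
noncomputable def futureAtoms [Fintype X] (L : List (DiffAtom X)) : List (DiffAtom X) :=
  elimVar (delayAtoms ++ L.map (map some))

theorem future_atomSet [Fintype X] (L : List (DiffAtom X)) :
    future (atomSet L) = atomSet (futureAtoms L) := by
  have hshift : ∀ (w : Val X) (δ : ℝ) (i : Option X),
      (some i).elim' 0 (Option.elim' δ fun x => (w x : ℝ)) =
        i.elim' 0 (fun x => (w x : ℝ) - δ) + δ := by
    rintro w δ (_ | x) <;> simp
  ext w
  simp only [future, atomSet, Set.mem_ofPred_eq, futureAtoms, forall_holds_elimVar_iff,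
    List.forall_mem_append, List.forall_mem_map, holds_map (hshift w _), delayAtoms,
    List.forall_mem_cons, Finset.mem_toList, Finset.mem_univ, forall_const]
  simp only [nonnegVarAtom, Holds, LtOrLe, Bool.false_eq_true, if_false, Option.elim',
    Int.cast_zero, zero_sub, neg_nonpos, sub_nonpos]
  constructor
  · rintro ⟨v, hv, δ, rfl⟩
    refine ⟨δ, ⟨δ.coe_nonneg, fun x => by simp [addVal]⟩, ?_⟩
    simpa [addVal] using hv
  · rintro ⟨r, ⟨hr, hrw⟩, hL⟩
    refine ⟨fun x => (w x - r).toNNReal, ?_, r.toNNReal, ?_⟩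
    · simpa [sub_nonneg.2 (hrw _)] using hL
    · ext x
      simp [addVal, sub_nonneg.2 (hrw x), hr]

theorem IsZone.inter {Z Z' : Set (Val X)} (h : IsZone Z) (h' : IsZone Z') : IsZone (Z ∩ Z') := by
  obtain ⟨g, rfl⟩ := h
  obtain ⟨g', rfl⟩ := h'
  exact ⟨.conj g g', rfl⟩

theorem resetSet_insert (x : X) (Y : Set X) (W : Set (Val X)) :
    resetSet (insert x Y) W = resetSet {x} (resetSet Y W) := by
  rw [resetSet, resetSet, resetSet, Set.image_image]
  congr 1
  ext v y : 2
  by_cases hx : y = x <;> by_cases hY : y ∈ Y <;> simp [resetVal, hx, hY]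

theorem IsZone.resetSet [Finite X] [Nonempty X] {Z : Set (Val X)} (h : IsZone Z) (Y : Set X) :
    IsZone (resetSet Y Z) := by
  induction Y, Y.toFinite using Set.Finite.induction_on with
  | empty =>
    have hid : resetVal (∅ : Set X) = id :=
      funext fun v => funext fun y => if_neg (Set.notMem_empty y)
    rwa [Timed.resetSet, hid, Set.image_id]
  | @insert x Y _ _ ih =>
    obtain ⟨L, hL⟩ := ih.exists_atomSet_eq
    rw [resetSet_insert, hL, resetSet_singleton_atomSet]
    exact isZone_atomSet _

theorem IsZone.future [Fintype X] [Nonempty X] {Z : Set (Val X)} (h : IsZone Z) :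
    IsZone (future Z) := by
  obtain ⟨L, rfl⟩ := h.exists_atomSet_eq
  rw [future_atomSet]
  exact isZone_atomSet _

theorem post_eq_future (t : Q × ClockConstraint X × Set X × Q) (W : Set (Val X)) :
    Post t W = future (Timed.resetSet t.2.2.1 (W ∩ sem t.2.1)) := by
  ext w
  constructor
  · rintro ⟨v, hv, δ, hg, rfl⟩
    exact ⟨_, ⟨v, ⟨hv, hg⟩, rfl⟩, δ, rfl⟩
  · rintro ⟨_, ⟨v, ⟨hv, hg⟩, rfl⟩, δ, rfl⟩
    exact ⟨v, hv, δ, hg, rfl⟩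

theorem IsZone.post [Fintype X] [Nonempty X] {Z : Set (Val X)} (h : IsZone Z)
    (t : Q × ClockConstraint X × Set X × Q) : IsZone (Post t Z) := by
  rw [post_eq_future]
  exact ((h.inter ⟨t.2.1, rfl⟩).resetSet _).future

theorem post_mono (t : Q × ClockConstraint X × Set X × Q) {W W' : Set (Val X)} (h : W ⊆ W') :
    Post t W ⊆ Post t W' := by
  rintro w ⟨v, hv, δ, hg, rfl⟩
  exact ⟨v, h hv, δ, hg, rfl⟩

theorem CmpOp.ordConnected_holds (op : CmpOp) (c : ℝ) : Set.OrdConnected {x | op.holds x c} := by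
  cases op
  exacts [Set.ordConnected_Iio, Set.ordConnected_Iic, Set.ordConnected_singleton,
    Set.ordConnected_Ici, Set.ordConnected_Ioi]

theorem IsZone.mem_of_between {Z : Set (Val X)} (hZ : IsZone Z) {u w v : Val X} (hu : u ∈ Z)
    (hw : w ∈ Z) (hclock : ∀ x, (v x : ℝ) ∈ Set.uIcc (u x : ℝ) (w x))
    (hdiff : ∀ x y, (v x : ℝ) - v y ∈ Set.uIcc ((u x : ℝ) - u y) ((w x : ℝ) - w y)) : v ∈ Z := by
  obtain ⟨g, rfl⟩ := hZ
  induction g with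
  | tt => trivial
  | single x op c => exact (op.ordConnected_holds c).uIcc_subset hu hw (hclock x)
  | diag x y op c => exact (op.ordConnected_holds c).uIcc_subset hu hw (hdiff x y)
  | conj g g' ih ih' => exact ⟨ih hu.1 hw.1, ih' hu.2 hw.2⟩

theorem isZone_initZone [Fintype X] [Nonempty X] : IsZone (initZone X) := by
  have hzero (u : Val X) : resetVal Set.univ u = zeroVal X := funext fun _ => if_pos trivial
  have h : {zeroVal X} = resetSet Set.univ (sem .tt) := by
    ext v
    constructor
    · rintro rfl
      exact ⟨zeroVal X, trivial, hzero _⟩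
    · rintro ⟨u, -, rfl⟩
      exact hzero u
  rw [initZone, h]
  exact (IsZone.resetSet ⟨.tt, rfl⟩ _).future

theorem zeroVal_mem_initZone : zeroVal X ∈ initZone X :=
  ⟨zeroVal X, rfl, 0, by ext; simp [addVal]⟩

def PostClosed (A : Automaton Q X) (N : Set (Q × Set (Val X))) : Prop :=
  ∀ t ∈ A.trans, ∀ Z, (t.1, Z) ∈ N → (Post t Z).Nonempty → ∃ Z', (t.2.2.2, Z') ∈ N ∧ Post t Z ⊆ Z'

def Covers (N : Set (Q × Set (Val X))) (q : Q) (V : Set (Val X)) : Prop :=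
  ∃ Z, (q, Z) ∈ N ∧ V ⊆ Z

section Saturated

variable [Fintype X] [Nonempty X] {A : Automaton Q X} {extra : Q → Set (Val X) → Set (Val X)}
  {N : Set (Q × Set (Val X))}

theorem ExtraSaturated.postClosed (hsat : ExtraSaturated A extra N)
    (hext : ∀ q Z, IsZone Z → Z ≠ ∅ → Z ⊆ extra q Z) (hN : ∀ p ∈ N, IsZone p.2) :
    PostClosed A N := fun ⟨q, g, Y, q'⟩ ht Z hZ hne => by
  obtain ⟨Z', hZ', hsub⟩ := hsat.2 q Z hZ g Y q' ht hne.ne_empty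
  exact ⟨Z', hZ', (hext q' _ ((hN _ hZ).post _) hne.ne_empty).trans hsub⟩

theorem ExtraSaturated.covers_initZone (hsat : ExtraSaturated A extra N)
    (hext : ∀ q Z, IsZone Z → Z ≠ ∅ → Z ⊆ extra q Z) : Covers N A.init (initZone X) := by
  obtain ⟨Z, hZ, hsub⟩ := hsat.1
  exact ⟨Z, hZ, (hext _ _ isZone_initZone (Set.nonempty_iff_ne_empty.1
    ⟨_, zeroVal_mem_initZone⟩)).trans hsub⟩

end Saturated

theorem PostClosed.covers {A : Automaton Q X} {N : Set (Q × Set (Val X))} (hN : PostClosed A N)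
    {t : Q × ClockConstraint X × Set X × Q} (ht : t ∈ A.trans) {V V' : Set (Val X)}
    (hV : Covers N t.1 V) (hV' : V' ⊆ Post t V) (hne : V'.Nonempty) : Covers N t.2.2.2 V' := by
  obtain ⟨Z, hZ, hVZ⟩ := hV
  obtain ⟨Z', hZ', hsub⟩ := hN t ht Z hZ ((hne.mono hV').mono (post_mono _ hVZ))
  exact ⟨Z', hZ', hV'.trans ((post_mono _ hVZ).trans hsub)⟩

end Timed

namespace Abug

/-- Zones cannot express the reachable values of `x1 - x2 + (x4 - x3)`. -/
def skew (v : Val (Fin 4)) : ℝ := v 0 - v 1 + (v 3 - v 2)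

def Inv (q : Fin 8) (v : Val (Fin 4)) : Prop :=
  match (q : ℕ) with
  | 0 => (v 0 : ℝ) = v 1 ∧ (v 1 : ℝ) = v 2 ∧ (v 2 : ℝ) = v 3
  | 1 => (v 0 : ℝ) = v 2 ∧ (v 1 : ℝ) = v 3
  | 2 | 5 => skew v = 3
  | 3 | 4 => skew v = 1
  | 6 => skew v = 0
  | _ => False

theorem inv_step {c c' : Fin 8 × Val (Fin 4)} (hs : Step Abug c c') (h : Inv c.1 c.2) :
    Inv c'.1 c'.2 := by
  cases hs with
  | delay q v δ =>
    fin_cases q <;> simp_all [Inv, skew, addVal]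
  | disc ht hg =>
    simp only [Abug, Set.mem_insert_iff, Set.mem_singleton_iff, Prod.mk.injEq] at ht
    rcases ht with ⟨rfl, rfl, rfl, rfl⟩ | ⟨rfl, rfl, rfl, rfl⟩ | ⟨rfl, rfl, rfl, rfl⟩ |
      ⟨rfl, rfl, rfl, rfl⟩ | ⟨rfl, rfl, rfl, rfl⟩ | ⟨rfl, rfl, rfl, rfl⟩ | ⟨rfl, rfl, rfl, rfl⟩ |
      ⟨rfl, rfl, rfl, rfl⟩ <;>
      simp_all [Inv, skew, resetVal, ClockConstraint.sat, CmpOp.holds] <;> linarith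

theorem not_reachable_q7 (v : Val (Fin 4)) : ¬ Reachable Abug (7, v) := by
  suffices ∀ c, Reachable Abug c → Inv c.1 c.2 from this _
  intro c hc
  induction hc with
  | refl => simp [Inv, Abug, zeroVal]
  | tail _ hs ih => exact inv_step hs ih

abbrev Transition := Fin 8 × ClockConstraint (Fin 4) × Set (Fin 4) × Fin 8

def t₀₁ : Transition := (0, .single 2 .le 3, {0, 2}, 1)
def t₁₂ : Transition := (1, .single 1 .eq 3, {1}, 2)
def t₂₃ : Transition := (2, .single 0 .eq 2, {0}, 3)
def t₃₂ : Transition := (3, .single 1 .eq 2, {1}, 2)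
def t₂₄ : Transition := (2, .single 0 .eq 2, {0}, 4)
def t₄₅ : Transition := (4, .single 1 .eq 2, {1}, 5)
def t₅₆ : Transition := (5, .single 0 .eq 3, {0}, 6)
def t₆₇ : Transition := (6, .conj (.diag 1 0 .gt 2) (.diag 3 2 .lt 2), ∅, 7)

/-- After `n` rounds of the loop `q2 → q3 → q2`, the zone at `q2` contains `lowGapVal n` and
`highGapVal n`, where `x4 - x3` is `1` and `3`. -/
noncomputable def lowGapVal (n : ℕ) : Val (Fin 4) := ![2, 0, 2 + 2 * n, 3 + 2 * n]

noncomputable def highGapVal (n : ℕ) : Val (Fin 4) := ![2, 2, 2 + 2 * n, 5 + 2 * n]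

noncomputable def lowGapAtQ3 (n : ℕ) : Val (Fin 4) := ![2, 2, 4 + 2 * n, 5 + 2 * n]

noncomputable def highGapAtQ3 (n : ℕ) : Val (Fin 4) := ![0, 2, 2 + 2 * n, 5 + 2 * n]

variable {N : Set (Fin 8 × Set (Val (Fin 4)))}

theorem covers_loop_zero (hN : PostClosed Abug N) (hinit : Covers N 0 (initZone (Fin 4))) :
    Covers N 2 {lowGapVal 0, highGapVal 0} := by
  have h₁ : Covers N 1 {![2, 3, 2, 3], ![0, 3, 0, 3]} := by
    refine hN.covers (t := t₀₁) (by simp [Abug, t₀₁]) hinit (Set.pair_subset ?_ ?_) (by simp)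
    · refine ⟨addVal (zeroVal _) 1, ⟨zeroVal _, rfl, 1, rfl⟩, 2, ?_, ?_⟩
      · norm_num [t₀₁, ClockConstraint.sat, CmpOp.holds, addVal, zeroVal]
      · funext i; fin_cases i <;> norm_num [t₀₁, addVal, resetVal, zeroVal, Fin.ext_iff]
    · refine ⟨addVal (zeroVal _) 3, ⟨zeroVal _, rfl, 3, rfl⟩, 0, ?_, ?_⟩
      · norm_num [t₀₁, ClockConstraint.sat, CmpOp.holds, addVal, zeroVal]
      · funext i; fin_cases i <;> norm_num [t₀₁, addVal, resetVal, zeroVal, Fin.ext_iff]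
  refine hN.covers (t := t₁₂) (by simp [Abug, t₁₂]) h₁ (Set.pair_subset ?_ ?_) (by simp)
  · refine ⟨![2, 3, 2, 3], by simp, 0, ?_, ?_⟩
    · norm_num [t₁₂, ClockConstraint.sat, CmpOp.holds]
    · funext i; fin_cases i <;> norm_num [t₁₂, lowGapVal, addVal, resetVal, Fin.ext_iff]
  · refine ⟨![0, 3, 0, 3], by simp, 2, ?_, ?_⟩
    · norm_num [t₁₂, ClockConstraint.sat, CmpOp.holds]
    · funext i; fin_cases i <;> norm_num [t₁₂, highGapVal, addVal, resetVal, Fin.ext_iff]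

theorem covers_loop_succ (hN : PostClosed Abug N) {n : ℕ}
    (h : Covers N 2 {lowGapVal n, highGapVal n}) :
    Covers N 3 {lowGapAtQ3 n, highGapAtQ3 n} := by
  refine hN.covers (t := t₂₃) (by simp [Abug, t₂₃]) h (Set.pair_subset ?_ ?_) (by simp)
  · refine ⟨lowGapVal n, by simp, 2, ?_, ?_⟩
    · norm_num [t₂₃, lowGapVal, ClockConstraint.sat, CmpOp.holds]
    · funext i
      fin_cases i <;> norm_num [t₂₃, lowGapVal, lowGapAtQ3, addVal, resetVal, Fin.ext_iff] <;> ring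
  · refine ⟨highGapVal n, by simp, 0, ?_, ?_⟩
    · norm_num [t₂₃, highGapVal, ClockConstraint.sat, CmpOp.holds]
    · funext i
      fin_cases i <;> norm_num [t₂₃, highGapVal, highGapAtQ3, addVal, resetVal, Fin.ext_iff]

theorem loop_pair_subset_post (n : ℕ) :
    {lowGapVal (n + 1), highGapVal (n + 1)} ⊆
      Post t₃₂ {lowGapAtQ3 n, highGapAtQ3 n} := by
  refine Set.pair_subset ⟨lowGapAtQ3 n, by simp, 0, ?_, ?_⟩ ⟨highGapAtQ3 n, by simp, 2, ?_, ?_⟩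
  · norm_num [t₃₂, lowGapAtQ3, ClockConstraint.sat, CmpOp.holds]
  · funext i
    fin_cases i <;> norm_num [t₃₂, lowGapVal, lowGapAtQ3, addVal, resetVal, Fin.ext_iff] <;> ring
  · norm_num [t₃₂, highGapAtQ3, ClockConstraint.sat, CmpOp.holds]
  · funext i
    fin_cases i <;> norm_num [t₃₂, highGapVal, highGapAtQ3, addVal, resetVal, Fin.ext_iff] <;> ring

theorem covers_loop (hN : PostClosed Abug N) (hinit : Covers N 0 (initZone (Fin 4))) (n : ℕ) :
    Covers N 2 {lowGapVal n, highGapVal n} := by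
  induction n with
  | zero => exact covers_loop_zero hN hinit
  | succ n ih =>
    exact hN.covers (t := t₃₂) (by simp [Abug, t₃₂]) (covers_loop_succ hN ih)
      (loop_pair_subset_post n) (by simp)

/-- In `q2`, but with `x1 - x2 + (x4 - x3) = 1` instead of `3`: this valuation reaches `q7`. -/
noncomputable def spuriousVal (k : ℕ) : Val (Fin 4) := ![2, 2, 4 + 2 * k, 5 + 2 * k]

theorem spuriousVal_between {k l : ℕ} (hkl : k < l) :
    (∀ x, (spuriousVal k x : ℝ) ∈ Set.uIcc (lowGapVal k x : ℝ) (highGapVal l x)) ∧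
    ∀ x y, (spuriousVal k x : ℝ) - spuriousVal k y ∈
      Set.uIcc ((lowGapVal k x : ℝ) - lowGapVal k y) ((highGapVal l x : ℝ) - highGapVal l y) := by
  have hkl' : (k : ℝ) + 1 ≤ l := by exact_mod_cast hkl
  refine ⟨fun x => ?_, fun x y => ?_⟩
  · fin_cases x <;> simp [spuriousVal, lowGapVal, highGapVal, Set.mem_uIcc] <;>
      left <;> constructor <;> linarith
  · fin_cases x <;> fin_cases y <;> simp [spuriousVal, lowGapVal, highGapVal, Set.mem_uIcc] <;>
      first | (left; constructor <;> linarith) | (right; constructor <;> linarith)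

theorem exists_q7_of_covers_spuriousVal (hN : PostClosed Abug N) {k : ℕ}
    (h : Covers N 2 {spuriousVal k}) : ∃ Z, (7, Z) ∈ N := by
  have h₄ : Covers N 4 {(![0, 2, 4 + 2 * k, 5 + 2 * k] : Val (Fin 4))} := by
    refine hN.covers (t := t₂₄) (by simp [Abug, t₂₄]) h
      (Set.singleton_subset_iff.2 ⟨spuriousVal k, rfl, 0, ?_, ?_⟩) (by simp)
    · norm_num [t₂₄, spuriousVal, ClockConstraint.sat, CmpOp.holds]
    · funext i; fin_cases i <;> norm_num [t₂₄, spuriousVal, addVal, resetVal, Fin.ext_iff]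
  have h₅ : Covers N 5 {(![3, 3, 7 + 2 * k, 8 + 2 * k] : Val (Fin 4))} := by
    refine hN.covers (t := t₄₅) (by simp [Abug, t₄₅]) h₄
      (Set.singleton_subset_iff.2 ⟨_, rfl, 3, ?_, ?_⟩) (by simp)
    · norm_num [t₄₅, ClockConstraint.sat, CmpOp.holds]
    · funext i; fin_cases i <;> norm_num [t₄₅, addVal, resetVal, Fin.ext_iff] <;> ring
  have h₆ : Covers N 6 {(![0, 3, 7 + 2 * k, 8 + 2 * k] : Val (Fin 4))} := by
    refine hN.covers (t := t₅₆) (by simp [Abug, t₅₆]) h₅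
      (Set.singleton_subset_iff.2 ⟨_, rfl, 0, ?_, ?_⟩) (by simp)
    · norm_num [t₅₆, ClockConstraint.sat, CmpOp.holds]
    · funext i; fin_cases i <;> norm_num [t₅₆, addVal, resetVal, Fin.ext_iff]
  have h₇ : Covers N 7 {(![0, 3, 7 + 2 * k, 8 + 2 * k] : Val (Fin 4))} := by
    refine hN.covers (t := t₆₇) (by simp [Abug, t₆₇]) h₆
      (Set.singleton_subset_iff.2 ⟨_, rfl, 0, ?_, ?_⟩) (by simp)
    · simp [t₆₇, ClockConstraint.sat, CmpOp.holds]
      norm_num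
    · funext i; fin_cases i <;> norm_num [t₆₇, addVal, resetVal]
  obtain ⟨Z, hZ, -⟩ := h₇
  exact ⟨Z, hZ⟩

theorem exists_q7_of_extraSaturated {extra : Fin 8 → Set (Val (Fin 4)) → Set (Val (Fin 4))}
    (hext : ∀ q Z, IsZone Z → Z ≠ ∅ → Z ⊆ extra q Z)
    (hfin : {W | ∃ Z, IsZone Z ∧ Z ≠ ∅ ∧ W = extra 2 Z}.Finite)
    (hN : ∀ p ∈ N, IsZone p.2) (hsat : ExtraSaturated Abug extra N) : ∃ Z, (7, Z) ∈ N := by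
  have hpost := hsat.postClosed hext hN
  have hB : ∀ n, ∃ B, (3, B) ∈ N ∧ {lowGapVal (n + 1), highGapVal (n + 1)} ⊆ Post t₃₂ B := by
    intro n
    obtain ⟨B, hB, hsub⟩ := covers_loop_succ hpost (covers_loop hpost (hsat.covers_initZone hext) n)
    exact ⟨B, hB, (loop_pair_subset_post n).trans (post_mono _ hsub)⟩
  choose B hBN hBsub using hB
  have hzone n : IsZone (Post t₃₂ (B n)) := (hN _ (hBN n)).post _
  have hne n : Post t₃₂ (B n) ≠ ∅ := (Set.insert_nonempty _ _ |>.mono (hBsub n)).ne_empty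
  -- finite range: two rounds `m < n` of the loop are extrapolated to the same zone
  obtain ⟨m, n, hmn, heq⟩ := hfin.exists_lt_map_eq_of_forall_mem
    (f := fun n => extra 2 (Post t₃₂ (B n))) fun n => Set.mem_ofPred.2 ⟨_, hzone n, hne n, rfl⟩
  obtain ⟨S, hS, hextS⟩ := hsat.2 3 (B m) (hBN m) _ _ _ (by simp [Abug]) (hne m)
  have hlow : lowGapVal (m + 1) ∈ S :=
    hextS (hext _ _ (hzone m) (hne m) (hBsub m (Set.mem_insert _ _)))
  have hhigh : highGapVal (n + 1) ∈ S := hextS <| (heq ▸ hext _ _ (hzone n) (hne n))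
    (hBsub n (Set.mem_insert_of_mem _ rfl))
  have hspur := (hN _ hS).mem_of_between hlow hhigh (spuriousVal_between (by omega)).1
    (spuriousVal_between (by omega)).2
  exact exists_q7_of_covers_spuriousVal hpost ⟨S, hS, Set.singleton_subset_iff.2 hspur⟩

end Abug

/-- `q7` is unreachable in `A_bug`, and every saturated set of any
finite-range extrapolation on `A_bug` fails soundness. -/
theorem no_sound_finite_extrapolation_for_Abug :
    (∀ v : Val (Fin 4), ¬ Reachable Abug (7, v)) ∧
    (∀ extra : Fin 8 → Set (Val (Fin 4)) → Set (Val (Fin 4)),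
      (∀ (q : Fin 8) (Z : Set (Val (Fin 4))), IsZone Z → Z ≠ ∅ →
        IsZone (extra q Z) ∧ Z ⊆ extra q Z) →
      (∀ q : Fin 8,
        {W | ∃ Z : Set (Val (Fin 4)), IsZone Z ∧ Z ≠ ∅ ∧ W = extra q Z}.Finite) →
      ∀ N : Set (Fin 8 × Set (Val (Fin 4))),
        (∀ p ∈ N, IsZone p.2 ∧ p.2 ≠ ∅) →
        ExtraSaturated Abug extra N →
        ∃ p ∈ N, ∀ v ∈ p.2, ¬ Reachable Abug (p.1, v)) := by
  refine ⟨Abug.not_reachable_q7, fun extra hext hfin N hN hsat => ?_⟩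
  obtain ⟨Z, hZ⟩ := Abug.exists_q7_of_extraSaturated (fun q Z h h' => (hext q Z h h').2) (hfin 2)
    (fun p hp => (hN p hp).1) hsat
  exact ⟨(7, Z), hZ, fun v _ => Abug.not_reachable_q7 v⟩
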